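/- arXiv:2404.11448 — 2 statements merged into one kernel-verified Lean document; each statement's English description precedes it below -/
import Mathlib

section
/- Let ν be even, c_m = cos(mπ/(ν+1)) for 0 ≤ m ≤ ν+1, and let C be the (ν+2)×(ν+2) matrix C_{mk} = T_k(c_m). The vectors y₁ = (1/2, 1, 1, …, 1, 1/2) and y₂ = (1/2, -1, 1, -1, …, 1, -1/2) satisfy (C y_j)_m = 0 for all 1 ≤ m ≤ ν and j = 1, 2. -/
/-!
Since `T_k(cos θ) = cos(kθ)`, both rows reduce to a trapezoidal sum
`∑_{k=0}^{N} w_k cos(kφ)` with `N = ν + 1`, endpoint weights `1/2` and `φ = θ` resp.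
`φ = θ + π` (the sign `(-1)^k` of `y₂` shifts the angle by `π`). Telescoping
`2 sin φ cos kφ = sin (k+1)φ - sin (k-1)φ` gives `2 sin φ · ∑_k w_k cos kφ = sin Nφ (1 + cos φ)`,
which vanishes because `Nφ` is a multiple of `π`, while `sin φ ≠ 0` because `0 < θ < π`.
-/

open Polynomial Polynomial.Chebyshev Real Finset

noncomputable def trapezoidWeight (N k : ℕ) : ℝ := if k = 0 ∨ k = N then 1/2 else 1

lemma sum_mul_trapezoidWeight (f : ℕ → ℝ) {N : ℕ} (hN : 1 ≤ N) :
    ∑ k ∈ range (N + 1), f k * trapezoidWeight N k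
      = ∑ k ∈ range (N + 1), f k - f 0 / 2 - f N / 2 := by
  have hweight : ∀ k, f k * trapezoidWeight N k
      = f k - (if k = 0 then f 0 / 2 else 0) - (if k = N then f N / 2 else 0) := by
    intro k
    unfold trapezoidWeight
    split_ifs <;> subst_vars <;> first | omega | ring
  simp only [hweight, sum_sub_distrib, sum_ite_eq', mem_range, Nat.zero_lt_succ,
    Nat.lt_succ_self, if_true]

lemma two_mul_sin_mul_sum_range_cos (φ : ℝ) (N : ℕ) :
    2 * sin φ * ∑ k ∈ range (N + 1), cos (k * φ)
      = sin ((N + 1) * φ) + sin (N * φ) + sin φ := by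
  induction N with
  | zero =>
    simp only [zero_add, range_one, sum_singleton, Nat.cast_zero, zero_mul, one_mul, cos_zero,
      sin_zero]
    ring
  | succ N ih =>
    rw [sum_range_succ, mul_add, ih]
    push_cast
    have hnext : sin ((N + 1 + 1) * φ) = sin ((N + 1) * φ + φ) := by ring_nf
    have hprev : sin (N * φ) = sin ((N + 1) * φ - φ) := by ring_nf
    rw [hnext, hprev, sin_add, sin_sub]
    ring

lemma sum_cos_mul_trapezoidWeight_eq_zero {N : ℕ} (hN : 1 ≤ N) {φ : ℝ} (hφ : sin φ ≠ 0)
    (hNφ : sin (N * φ) = 0) :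
    ∑ k ∈ range (N + 1), cos (k * φ) * trapezoidWeight N k = 0 := by
  rw [sum_mul_trapezoidWeight _ hN]
  refine (mul_right_injective₀ (mul_ne_zero two_ne_zero hφ)) ?_
  have hsum := two_mul_sin_mul_sum_range_cos φ N
  have hsucc : sin ((N + 1) * φ) = sin (N * φ) * cos φ + cos (N * φ) * sin φ := by
    rw [add_mul, one_mul, sin_add]
  simp only [Nat.cast_zero, zero_mul, cos_zero, mul_zero]
  linear_combination hsum + hsucc + (1 + cos φ) * hNφ

theorem stmt_9_general (ν : ℕ)
    (y₁ y₂ : ℕ → ℝ)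
    (hy₁ : ∀ n ≤ ν + 1, y₁ n = if n = 0 ∨ n = ν + 1 then 1/2 else 1)
    (hy₂ : ∀ n ≤ ν + 1, y₂ n = (-1 : ℝ) ^ n * (if n = 0 ∨ n = ν + 1 then 1/2 else 1)) :
    ∀ m : ℕ, 1 ≤ m → m ≤ ν →
      (∑ k ∈ range (ν + 2), (T ℝ k).eval (Real.cos (m * π / (ν + 1))) * y₁ k) = 0 ∧
      (∑ k ∈ range (ν + 2), (T ℝ k).eval (Real.cos (m * π / (ν + 1))) * y₂ k) = 0 := by
  intro m hm1 hm2
  set θ : ℝ := m * π / (ν + 1)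
  have hθ : ((ν + 1 : ℕ) : ℝ) * θ = m * π := by
    push_cast
    exact mul_div_cancel₀ _ (by positivity)
  have hsin : sin θ ≠ 0 := by
    have hmν : (m : ℝ) < ν + 1 := by exact_mod_cast Nat.lt_succ_of_le hm2
    refine (sin_pos_of_pos_of_lt_pi (by positivity) ?_).ne'
    rw [div_lt_iff₀ (by positivity)]
    nlinarith [pi_pos]
  have hmem : ∀ k ∈ range (ν + 2), k ≤ ν + 1 := fun k hk => Nat.lt_succ_iff.mp (mem_range.mp hk)
  constructor
  · calc _ = ∑ k ∈ range (ν + 1 + 1), cos (k * θ) * trapezoidWeight (ν + 1) k :=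
          sum_congr rfl fun k hk => by rw [T_real_cos, hy₁ k (hmem k hk), trapezoidWeight]; rfl
      _ = 0 := sum_cos_mul_trapezoidWeight_eq_zero (by omega) hsin (by rw [hθ, sin_nat_mul_pi])
  · calc _ = ∑ k ∈ range (ν + 1 + 1), cos (k * (θ + π)) * trapezoidWeight (ν + 1) k :=
          sum_congr rfl fun k hk => by
            rw [T_real_cos, hy₂ k (hmem k hk), trapezoidWeight, mul_add, cos_add_nat_mul_pi]
            push_cast
            ring
      _ = 0 := by
        refine sum_cos_mul_trapezoidWeight_eq_zero (by omega) (by rwa [sin_add_pi, neg_ne_zero]) ?_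
        rw [mul_add, hθ, ← add_mul, ← Nat.cast_add, sin_nat_mul_pi]

/-- For `ν` even, the vectors `y₁ = (1/2, 1, …, 1, 1/2)` and
`y₂ = (1/2, -1, 1, …, 1, -1/2)` are annihilated by the middle rows `1 ≤ m ≤ ν` of the
collocation matrix `C_{mk} = T_k(cos(mπ/(ν+1)))`. -/
theorem stmt_9 (ν : ℕ) (hν : 0 < ν) (hνe : Even ν)
    (y₁ y₂ : ℕ → ℝ)
    (hy₁ : ∀ n ≤ ν + 1, y₁ n = if n = 0 ∨ n = ν + 1 then 1/2 else 1)
    (hy₂ : ∀ n ≤ ν + 1, y₂ n = (-1 : ℝ) ^ n * (if n = 0 ∨ n = ν + 1 then 1/2 else 1)) :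
    ∀ m : ℕ, 1 ≤ m → m ≤ ν →
      (∑ k ∈ range (ν + 2), (T ℝ k).eval (Real.cos (m * π / (ν + 1))) * y₁ k) = 0 ∧
      (∑ k ∈ range (ν + 2), (T ℝ k).eval (Real.cos (m * π / (ν + 1))) * y₂ k) = 0 :=
  stmt_9_general ν y₁ y₂ hy₁ hy₂
end

section
/- Let ν ≥ 1, d ≥ 1 with ν ≥ d+1, and let B be an infinite lower-bandwidth-(d+1) matrix (B_{kn} = 0 for |k−n| > d+1). Define B̃ on indices 0 ≤ n, m ≤ ν+1 by B̃_{nm} = B_{nm} for 0 ≤ n < ν−d or n = ν+1, and B̃_{nm} = B_{nm} + B_{(2ν+2−n),m} for ν−d ≤ n ≤ ν. Then for all 0 ≤ m, n ≤ ν+1, Σ_{k=0}^{∞} T_k(c_m) B_{kn} = Σ_{k=0}^{ν+1} T_k(c_m) B̃_{kn}, where c_m = cos(mπ/(ν+1)). -/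
/-!
If `(ν+1)θ` is a multiple of `π`, then `T_{2(ν+1)-j}(cos θ) = cos((2(ν+1)-j)θ) = T_j(cos θ)`.
Bandedness cuts the series off below row `2ν+2`, and the reflection `k ↦ 2(ν+1) - k` moves
rows `ν+2, …, 2ν+1` onto rows `ν, …, 1`; of these, only rows `ν-d, …, ν` receive a nonzero
entry, which is exactly the correction term in `B̃`.
-/

open Polynomial Polynomial.Chebyshev Real Finset

theorem Polynomial.Chebyshev.T_two_mul_sub_eval_cos {θ : ℝ} {N m : ℤ} (h : N * θ = m * π)
    (j : ℤ) : (T ℝ (2 * N - j)).eval (cos θ) = (T ℝ j).eval (cos θ) := by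
  have harg : ((2 * N - j : ℤ) : ℝ) * θ = m * (2 * π) - j * θ := by
    push_cast; linear_combination 2 * h
  rw [T_real_cos, T_real_cos, harg, cos_int_mul_two_pi_sub]

section Fold

variable {R : Type*} [NonUnitalNonAssocSemiring R] {t b : ℕ → R} {N : ℕ}

theorem sum_range_two_mul_eq_add_sum_Ico_reflect (hN : 0 < N)
    (ht : ∀ k ≤ 2 * N, t (2 * N - k) = t k) :
    ∑ k ∈ range (2 * N), t k * b k =
      ∑ k ∈ range (N + 1), t k * b k + ∑ k ∈ Ico 1 N, t k * b (2 * N - k) := by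
  have hreflect : ∑ k ∈ Ico 1 N, t (2 * N - k) * b (2 * N - k) =
      ∑ k ∈ Ico (N + 1) (2 * N), t k * b k := by
    rw [sum_Ico_reflect (fun k ↦ t k * b k) 1 (by omega : N ≤ 2 * N + 1),
      show 2 * N + 1 - N = N + 1 by omega, Nat.add_sub_cancel]
  rw [← sum_range_add_sum_Ico _ (by omega : N + 1 ≤ 2 * N), ← hreflect]
  exact congrArg _ (sum_congr rfl fun k hk ↦ by rw [ht k (by grind)])

theorem sum_range_two_mul_eq_sum_fold {bt : ℕ → R} {L : ℕ} (hN : 0 < N) (hL : 0 < L)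
    (ht : ∀ k ≤ 2 * N, t (2 * N - k) = t k) (hb : ∀ k < L, b (2 * N - k) = 0)
    (hunfolded : ∀ k, k < L ∨ k = N → bt k = b k)
    (hfolded : ∀ k, L ≤ k → k < N → bt k = b k + b (2 * N - k)) :
    ∑ k ∈ range (2 * N), t k * b k = ∑ k ∈ range (N + 1), t k * bt k := by
  have hterm : ∀ k ∈ range (N + 1),
      t k * bt k = t k * b k + if k ∈ Ico 1 N then t k * b (2 * N - k) else 0 := by
    intro k hk
    rw [mem_range] at hk
    rcases lt_or_ge k L with hkL | hLk
    · rw [hunfolded k (.inl hkL), hb k hkL, mul_zero, ite_self, add_zero]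
    · rcases lt_or_eq_of_le (Nat.lt_succ_iff.mp hk) with hkN | rfl
      · rw [hfolded k hLk hkN, mul_add, if_pos (mem_Ico.mpr ⟨by omega, hkN⟩)]
      · rw [hunfolded k (.inr rfl), if_neg (by simp), add_zero]
  rw [sum_range_two_mul_eq_add_sum_Ico_reflect hN ht, sum_congr rfl hterm, sum_add_distrib,
    sum_ite_mem, inter_eq_right.mpr fun k hk ↦ by grind]

end Fold

theorem stmt_16_general (ν d : ℕ) (hν : d + 1 ≤ ν)
    (B Bt : ℕ → ℕ → ℝ)
    (hband : ∀ k n : ℕ, ((d : ℤ) + 1) < |(k : ℤ) - (n : ℤ)| → B k n = 0)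
    (hBt1 : ∀ n m : ℕ, (n < ν - d ∨ n = ν + 1) → Bt n m = B n m)
    (hBt2 : ∀ n m : ℕ, ν - d ≤ n → n ≤ ν → Bt n m = B n m + B (2 * ν + 2 - n) m) :
    ∀ m n : ℕ, m ≤ ν + 1 → n ≤ ν + 1 →
      (∑' k : ℕ, (T ℝ k).eval (Real.cos (m * π / (ν + 1))) * B k n) =
        ∑ k ∈ range (ν + 2), (T ℝ k).eval (Real.cos (m * π / (ν + 1))) * Bt k n := by
  intro m n _ hn
  have hvanish : ∀ k, n + d + 1 < k → B k n = 0 := fun k hk ↦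
    hband k n (lt_of_lt_of_le (by omega) (le_abs_self _))
  have hsymm : ∀ k ≤ 2 * (ν + 1), (T ℝ ↑(2 * (ν + 1) - k)).eval (cos (m * π / (ν + 1))) =
      (T ℝ k).eval (cos (m * π / (ν + 1))) := by
    intro k hk
    have hθ : ((ν + 1 : ℕ) : ℤ) * (m * π / (ν + 1)) = (m : ℤ) * π := by
      push_cast; field_simp
    simpa [Nat.cast_sub hk] using T_two_mul_sub_eval_cos hθ k
  rw [tsum_eq_sum (s := range (2 * (ν + 1))) fun k hk ↦ by
    rw [mem_range, not_lt] at hk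
    rw [hvanish k (by omega), mul_zero]]
  exact sum_range_two_mul_eq_sum_fold (L := ν - d) (by omega) (by omega) hsymm
    (fun k _ ↦ hvanish _ (by omega)) (fun k hk ↦ hBt1 k n hk)
    (fun k hLk hkN ↦ by rw [hBt2 k n hLk (by omega), mul_add_one])

/-- Folding a banded infinite Chebyshev-coefficient matrix `B` onto `(ν+2)` rows: with
`B̃_{nm} = B_{nm}` for `0 ≤ n < ν-d` or `n = ν+1` and `B̃_{nm} = B_{nm} + B_{2ν+2-n,m}`
for `ν-d ≤ n ≤ ν`, one has `Σ_{k=0}^∞ T_k(c_m) B_{kn} = Σ_{k=0}^{ν+1} T_k(c_m) B̃_{kn}`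
at the Clenshaw–Curtis points `c_m = cos(mπ/(ν+1))`. -/
theorem stmt_16 (ν d : ℕ) (hd : 1 ≤ d) (hν : d + 1 ≤ ν)
    (B Bt : ℕ → ℕ → ℝ)
    (hband : ∀ k n : ℕ, ((d : ℤ) + 1) < |(k : ℤ) - (n : ℤ)| → B k n = 0)
    (hBt1 : ∀ n m : ℕ, (n < ν - d ∨ n = ν + 1) → Bt n m = B n m)
    (hBt2 : ∀ n m : ℕ, ν - d ≤ n → n ≤ ν → Bt n m = B n m + B (2 * ν + 2 - n) m) :
    ∀ m n : ℕ, m ≤ ν + 1 → n ≤ ν + 1 →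
      (∑' k : ℕ, (T ℝ k).eval (Real.cos (m * π / (ν + 1))) * B k n) =
        ∑ k ∈ range (ν + 2), (T ℝ k).eval (Real.cos (m * π / (ν + 1))) * Bt k n :=
  stmt_16_general ν d hν B Bt hband hBt1 hBt2
end
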